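/- arXiv:1911.01284 — 4 statements merged into one kernel-verified Lean document; each statement's English description precedes it below -/
import Mathlib

section
/- Let T ≥ 2, M > 0 and δ0 ∈ (0,1/2), and let 0 < ε < δ0/(2√(M² + 1)). Then for every γ ∈ 𝒢_ad, the ε-interior (q_γ)^ε of the domain q_γ satisfies the geometric optics condition; in particular q_γ belongs to the admissible class 𝒬_ad^ε = {q ⊂ (0,1)×(0,T) : q open and q^ε satisfies the geometric optics condition}. -/
/-- The 2-periodic folding map `s(y) = |y - 2k|`, `k` the integer nearest to `y/2`. -/
noncomputable def fold (y : ℝ) : ℝ := |y - 2 * (round (y / 2) : ℝ)|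

/-- A set `A ⊆ [0,1] × (0,T)` satisfies the geometric optics condition if every
characteristic line, reflected according to geometric optics, meets `A`. -/
def GeoOptics (T : ℝ) (A : Set (ℝ × ℝ)) : Prop :=
  ∀ x0 ∈ Set.Icc (0 : ℝ) 1, ∀ σ : ℝ, (σ = 1 ∨ σ = -1) →
    ∃ t ∈ Set.Ioo (0 : ℝ) T, (fold (x0 + σ * t), t) ∈ A

/-- Euclidean distance on `ℝ × ℝ`. -/
noncomputable def eDist (X Y : ℝ × ℝ) : ℝ :=
  Real.sqrt ((X.1 - Y.1) ^ 2 + (X.2 - Y.2) ^ 2)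

/-- The `ε`-interior of a set `q ⊆ ℝ²`: points of `q` at (Euclidean) distance `> ε`
from the boundary of `q`. -/
def epsInterior (ε : ℝ) (q : Set (ℝ × ℝ)) : Set (ℝ × ℝ) :=
  {X | X ∈ q ∧ ∀ Y ∈ frontier q, ε < eDist X Y}
/-- The admissible class `𝒢_ad` of `M`-Lipschitz curves `γ : [0,T] → [δ0, 1−δ0]`. -/
def Gad (T M δ0 : ℝ) : Set (ℝ → ℝ) :=
  {γ | (∀ s ∈ Set.Icc (0 : ℝ) T, ∀ t ∈ Set.Icc (0 : ℝ) T, |γ t - γ s| ≤ M * |t - s|) ∧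
       ∀ t ∈ Set.Icc (0 : ℝ) T, δ0 ≤ γ t ∧ γ t ≤ 1 - δ0}

/-- The moving control domain `q_γ = {(x,t) ∈ (0,1)×(0,T) : |x − γ(t)| < δ0}`. -/
def qGamma (T δ0 : ℝ) (γ : ℝ → ℝ) : Set (ℝ × ℝ) :=
  {p | p ∈ Set.Ioo (0 : ℝ) 1 ×ˢ Set.Ioo (0 : ℝ) T ∧ |p.1 - γ p.2| < δ0}

lemma abs_half (x c : ℝ) : |x - 2*c| = 2*|x/2 - c| := by
  rw [show x - 2*c = 2*(x/2 - c) by ring, abs_mul, abs_two]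

lemma round_nearest (x : ℝ) (m : ℤ) : |x - round x| ≤ |x - m| := by
  rcases eq_or_ne m (round x) with h | h
  · rw [h]
  · have h1 : |x - round x| ≤ 1/2 := abs_sub_round x
    have h2 : (1 : ℝ) ≤ |(m : ℝ) - round x| := by
      have : (1 : ℝ) ≤ |((m - round x : ℤ) : ℝ)| := by
        rw [← Int.cast_abs]
        exact_mod_cast Int.one_le_abs (sub_ne_zero.mpr h)
      simpa using this
    have h3 : |(m:ℝ) - round x| - |x - round x| ≤ |x - m| := by
      calc |(m:ℝ) - round x| - |x - round x|
          ≤ |((m:ℝ) - round x) - (x - round x)| := abs_sub_abs_le_abs_sub _ _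
        _ = |x - m| := by rw [← abs_neg]; ring_nf
    linarith

lemma fold_eq (y : ℝ) : fold y = 2 * |y/2 - round (y/2)| := by
  rw [fold, abs_half]

lemma fold_le (y : ℝ) (k : ℤ) : fold y ≤ |y - 2*k| := by
  have h := round_nearest (y/2) k
  rw [fold_eq, abs_half]; linarith

lemma fold_nonneg (y : ℝ) : 0 ≤ fold y := abs_nonneg _

lemma fold_le_one (y : ℝ) : fold y ≤ 1 := by
  have h := abs_sub_round (y/2)
  rw [fold_eq]; linarith

lemma fold_lip (a b : ℝ) : |fold a - fold b| ≤ |a - b| := by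
  have key : ∀ u v : ℝ, fold u - fold v ≤ |u - v| := by
    intro u v
    have h1 : fold u ≤ |u - 2 * (round (v/2) : ℤ)| := fold_le u _
    have h2 : |u - 2 * ((round (v/2) : ℤ) : ℝ)| ≤ |u - v| + |v - 2 * ((round (v/2):ℤ) : ℝ)| := by
      calc |u - 2 * ((round (v/2):ℤ):ℝ)| = |(u - v) + (v - 2 * ((round (v/2):ℤ):ℝ))| := by ring_nf
        _ ≤ _ := abs_add_le _ _
    have h3 : |v - 2 * ((round (v/2):ℤ):ℝ)| = fold v := by rw [fold]
    push_cast at h1 h2 h3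
    linarith
  rw [abs_sub_le_iff]
  refine ⟨key a b, ?_⟩
  have := key b a; rwa [abs_sub_comm] at this

lemma fold_cont : Continuous fold := by
  rw [Metric.continuous_iff]
  intro b δ hδ
  exact ⟨δ, hδ, fun a ha => lt_of_le_of_lt (by simpa [Real.dist_eq] using fold_lip a b) ha⟩

lemma fold_two : fold 2 = 0 := by rw [fold]; norm_num [round_eq]
lemma fold_one : fold 1 = 1 := by rw [fold]; norm_num [round_eq]
lemma fold_zero : fold 0 = 0 := by rw [fold]; norm_num [round_eq]
lemma fold_neg_one : fold (-1) = 1 := by rw [fold]; norm_num [round_eq]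

lemma qGamma_open (T M δ0 : ℝ) (γ : ℝ → ℝ) (hM : 0 < M) (hδ0 : 0 < δ0)
    (hL : ∀ s ∈ Set.Icc (0:ℝ) T, ∀ t ∈ Set.Icc (0:ℝ) T, |γ t - γ s| ≤ M * |t - s|)
    (hB : ∀ t ∈ Set.Icc (0:ℝ) T, δ0 ≤ γ t ∧ γ t ≤ 1 - δ0) :
    IsOpen (qGamma T δ0 γ) := by
  rw [Metric.isOpen_iff]
  rintro p ⟨⟨⟨hx0, hx1⟩, ht0, ht1⟩, hd⟩
  set d := |p.1 - γ p.2| with hd_def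
  refine ⟨min (min p.2 (T - p.2)) ((δ0 - d)/(M+1)), ?_, ?_⟩
  · have : 0 < (δ0 - d)/(M+1) := div_pos (by linarith) (by linarith)
    simp only [lt_min_iff]
    exact ⟨⟨ht0, by linarith⟩, this⟩
  · intro q hq
    rw [Metric.mem_ball, Prod.dist_eq, max_lt_iff, Real.dist_eq, Real.dist_eq] at hq
    obtain ⟨h1, h2⟩ := hq
    have hr1 : |q.1 - p.1| < (δ0 - d)/(M+1) := lt_of_lt_of_le h1 (min_le_right _ _)
    have hr2 : |q.2 - p.2| < (δ0 - d)/(M+1) := lt_of_lt_of_le h2 (min_le_right _ _)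
    have hr3 : |q.2 - p.2| < p.2 := lt_of_lt_of_le h2 ((min_le_left _ _).trans (min_le_left _ _))
    have hr4 : |q.2 - p.2| < T - p.2 := lt_of_lt_of_le h2 ((min_le_left _ _).trans (min_le_right _ _))
    rw [abs_lt] at hr3 hr4
    have hq2T : q.2 ∈ Set.Icc 0 T := ⟨by linarith, by linarith⟩
    have hp2T : p.2 ∈ Set.Icc 0 T := ⟨le_of_lt ht0, le_of_lt ht1⟩
    have hlip : |γ q.2 - γ p.2| ≤ M * |q.2 - p.2| := hL p.2 hp2T q.2 hq2T
    have hdn : 0 ≤ δ0 - d := by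
      have := abs_nonneg (q.1 - p.1); nlinarith [abs_nonneg (q.2 - p.2)]
    have key : |q.1 - γ q.2| < δ0 := by
      have t1 : |q.1 - γ q.2| ≤ |q.1 - p.1| + |p.1 - γ p.2| + |γ p.2 - γ q.2| := by
        calc |q.1 - γ q.2| = |(q.1 - p.1) + (p.1 - γ p.2) + (γ p.2 - γ q.2)| := by ring_nf
          _ ≤ |(q.1 - p.1) + (p.1 - γ p.2)| + |γ p.2 - γ q.2| := abs_add_le _ _
          _ ≤ |q.1 - p.1| + |p.1 - γ p.2| + |γ p.2 - γ q.2| := by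
              have := abs_add_le (q.1 - p.1) (p.1 - γ p.2); linarith
      have t2 : |γ p.2 - γ q.2| ≤ M * |q.2 - p.2| := by rwa [abs_sub_comm]
      have t3 : M * |q.2 - p.2| < M * ((δ0 - d)/(M+1)) := by
        exact mul_lt_mul_of_pos_left hr2 hM
      have t4 : |q.1 - p.1| + M * ((δ0 - d)/(M+1)) + d ≤ δ0 := by
        have : (M+1) * ((δ0 - d)/(M+1)) = δ0 - d := by field_simp
        nlinarith [hr1]
      linarith
    have hγq := hB q.2 hq2T
    rw [abs_lt] at key
    exact ⟨⟨⟨by linarith [hγq.1], by linarith [hγq.2]⟩, by constructor <;> linarith⟩, by rw [abs_lt]; exact key⟩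

set_option maxHeartbeats 1000000 in
lemma crossing (T M δ0 ε : ℝ) (γ : ℝ → ℝ) (x0 σ ta tb : ℝ)
    (hT : 2 ≤ T) (hM : 0 < M) (hδ0 : 0 < δ0) (hδ0' : δ0 < 1/2)
    (hε : 0 < ε) (hεK : ε * Real.sqrt (M^2+1) < δ0/2)
    (hL : ∀ s ∈ Set.Icc (0:ℝ) T, ∀ t ∈ Set.Icc (0:ℝ) T, |γ t - γ s| ≤ M * |t - s|)
    (hB : ∀ t ∈ Set.Icc (0:ℝ) T, δ0 ≤ γ t ∧ γ t ≤ 1 - δ0)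
    (hopen : IsOpen (qGamma T δ0 γ))
    (hσ : |σ| = 1)
    (hta : ta ∈ Set.Icc (0:ℝ) 2) (htb : tb ∈ Set.Icc (0:ℝ) 2)
    (hfa : fold (x0 + σ * ta) = 0) (hfb : fold (x0 + σ * tb) = 1) :
    ∃ t ∈ Set.Ioo (0:ℝ) T, (fold (x0 + σ * t), t) ∈ epsInterior ε (qGamma T δ0 γ) := by
  set K := Real.sqrt (M^2+1) with hK_def
  have hK0 : 0 ≤ K := Real.sqrt_nonneg _
  have hK2 : K^2 = M^2+1 := Real.sq_sqrt (by positivity)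
  have hK1 : 1 ≤ K := by nlinarith
  have hεδ : ε < δ0/2 := by nlinarith
  have hε14 : ε < 1/4 := by linarith
  set g : ℝ → ℝ := fun t => fold (x0 + σ * t) - γ t with hg_def
  have hgval : ∀ t, g t = fold (x0 + σ * t) - γ t := fun t => rfl
  -- shifted times
  set ta' := if ta ≤ 1 then ta + ε else ta - ε with hta'_def
  set tb' := if tb ≤ 1 then tb + ε else tb - ε with htb'_def
  have hshift : ∀ c : ℝ, c ∈ Set.Icc (0:ℝ) 2 →
      (if c ≤ 1 then c + ε else c - ε) ∈ Set.Icc ε (2-ε) ∧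
      |fold (x0 + σ * (if c ≤ 1 then c + ε else c - ε)) - fold (x0 + σ * c)| ≤ ε := by
    intro c hc
    constructor
    · split_ifs with h
      · exact ⟨by linarith [hc.1], by linarith⟩
      · push_neg at h; exact ⟨by linarith, by linarith [hc.2]⟩
    · have := fold_lip (x0 + σ * (if c ≤ 1 then c + ε else c - ε)) (x0 + σ * c)
      refine this.trans ?_
      have : x0 + σ * (if c ≤ 1 then c + ε else c - ε) - (x0 + σ * c)
          = σ * ((if c ≤ 1 then c + ε else c - ε) - c) := by ring
      rw [this, abs_mul, hσ, one_mul]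
      split_ifs <;> simp [abs_of_nonneg hε.le, abs_of_nonpos, hε.le] <;> ring_nf <;>
        simp [abs_of_nonneg hε.le]
  obtain ⟨hta'I, hta'f⟩ := hshift ta hta
  obtain ⟨htb'I, htb'f⟩ := hshift tb htb
  rw [← hta'_def] at hta'I hta'f
  rw [← htb'_def] at htb'I htb'f
  have hta'T : ta' ∈ Set.Icc (0:ℝ) T := ⟨by linarith [hta'I.1], by linarith [hta'I.2]⟩
  have htb'T : tb' ∈ Set.Icc (0:ℝ) T := ⟨by linarith [htb'I.1], by linarith [htb'I.2]⟩
  -- sign of g at shifted times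
  have hga : g ta' < 0 := by
    have h1 : fold (x0 + σ * ta') ≤ ε := by
      rw [abs_le] at hta'f; linarith [hta'f.2, hfa]
    have h2 := (hB ta' hta'T).1
    rw [hgval]; linarith
  have hgb : 0 < g tb' := by
    have h1 : 1 - ε ≤ fold (x0 + σ * tb') := by
      rw [abs_le] at htb'f; linarith [htb'f.1, hfb]
    have h2 := (hB tb' htb'T).2
    rw [hgval]; linarith
  -- continuity
  have hγc : ContinuousOn γ (Set.Icc 0 T) := by
    have : LipschitzOnWith (Real.toNNReal M) γ (Set.Icc 0 T) := by
      apply LipschitzOnWith.of_dist_le_mul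
      intro x hx y hy
      rw [Real.dist_eq, Real.dist_eq]
      have := hL y hy x hx
      rwa [Real.coe_toNNReal _ hM.le]
    exact this.continuousOn
  have hgc : ContinuousOn g (Set.Icc 0 T) := by
    apply ContinuousOn.sub
    · exact (fold_cont.comp (continuous_const.add (continuous_const.mul continuous_id))).continuousOn
    · exact hγc
  -- IVT
  obtain ⟨t, htI, hgt⟩ : ∃ t, t ∈ Set.Ioo ε (2-ε) ∧ g t = 0 := by
    rcases le_total ta' tb' with h | h
    · have hsub : Set.Icc ta' tb' ⊆ Set.Icc 0 T :=
        Set.Icc_subset_Icc hta'T.1 htb'T.2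
      have := intermediate_value_Ioo h (hgc.mono hsub)
      have h0 : (0:ℝ) ∈ Set.Ioo (g ta') (g tb') := ⟨hga, hgb⟩
      obtain ⟨t, htmem, hteq⟩ := this h0
      exact ⟨t, ⟨lt_of_le_of_lt hta'I.1 htmem.1, lt_of_lt_of_le htmem.2 htb'I.2⟩, hteq⟩
    · have hsub : Set.Icc tb' ta' ⊆ Set.Icc 0 T :=
        Set.Icc_subset_Icc htb'T.1 hta'T.2
      have := intermediate_value_Ioo' h (hgc.mono hsub)
      have h0 : (0:ℝ) ∈ Set.Ioo (g ta') (g tb') := ⟨hga, hgb⟩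
      obtain ⟨t, htmem, hteq⟩ := this h0
      exact ⟨t, ⟨lt_of_le_of_lt htb'I.1 htmem.1, lt_of_lt_of_le htmem.2 hta'I.2⟩, hteq⟩
  have htT : t ∈ Set.Icc (0:ℝ) T := ⟨by linarith [htI.1], by linarith [htI.2]⟩
  have hfold_eq : fold (x0 + σ * t) = γ t := by
    have h2 : fold (x0 + σ * t) - γ t = 0 := by rw [← hgval t]; exact hgt
    linarith
  have hγt := hB t htT
  refine ⟨t, ⟨by linarith [htI.1], by linarith [htI.2]⟩, ?_, ?_⟩
  · -- membership in qGamma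
    rw [hfold_eq]
    refine ⟨⟨⟨by linarith [hγt.1], by linarith [hγt.2]⟩, by linarith [htI.1], by linarith [htI.2]⟩, ?_⟩
    simp [hδ0]
  · -- frontier condition
    intro Y hY
    by_contra hcon
    push_neg at hcon
    have hYnot : Y ∉ qGamma T δ0 γ := by
      rw [hopen.frontier_eq] at hY
      exact hY.2
    apply hYnot
    -- unpack the distance bound
    rw [hfold_eq] at hcon
    simp only [eDist] at hcon
    set u := γ t - Y.1 with hu_def
    set v := t - Y.2 with hv_def
    have hsq : u^2 + v^2 ≤ ε^2 := by
      have h0 : (0:ℝ) ≤ u^2 + v^2 := by positivity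
      nlinarith [Real.sq_sqrt h0, Real.sqrt_nonneg (u^2+v^2), hcon]
    have hv : |v| ≤ ε := by nlinarith [sq_abs v, abs_nonneg v, sq_nonneg u]
    have hu : |u| ≤ ε := by nlinarith [sq_abs u, abs_nonneg u, sq_nonneg v]
    rw [abs_le] at hv
    have hY2 : Y.2 ∈ Set.Icc (0:ℝ) T := ⟨by linarith [htI.1], by linarith [htI.2]⟩
    have hY2o : Y.2 ∈ Set.Ioo (0:ℝ) T := ⟨by linarith [htI.1], by linarith [htI.2]⟩
    have hlip : |γ Y.2 - γ t| ≤ M * |t - Y.2| := by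
      have := hL t htT Y.2 hY2
      rwa [show |Y.2 - t| = |t - Y.2| by rw [abs_sub_comm]] at this
    have hbound : |Y.1 - γ Y.2| ≤ K * ε := by
      have t1 : |Y.1 - γ Y.2| ≤ |u| + M * |v| := by
        rw [hu_def, hv_def]
        have e1 : |Y.1 - γ Y.2| ≤ |Y.1 - γ t| + |γ Y.2 - γ t| := by
          calc |Y.1 - γ Y.2| = |(Y.1 - γ t) + (γ t - γ Y.2)| := by ring_nf
            _ ≤ |Y.1 - γ t| + |γ t - γ Y.2| := abs_add_le _ _
            _ = |Y.1 - γ t| + |γ Y.2 - γ t| := by rw [abs_sub_comm (γ t) (γ Y.2)]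
        have e2 : |Y.1 - γ t| = |γ t - Y.1| := abs_sub_comm _ _
        rw [e2] at e1
        linarith [hlip]
      have t2 : (|u| + M * |v|)^2 ≤ (K * ε)^2 := by
        have := sq_nonneg (M * |u| - |v|)
        have hu2 : |u|^2 = u^2 := sq_abs u
        have hv2 : |v|^2 = v^2 := sq_abs v
        nlinarith [abs_nonneg u, abs_nonneg v]
      have t3 : |u| + M * |v| ≤ K * ε := by
        nlinarith [abs_nonneg u, abs_nonneg v, mul_nonneg hK0 hε.le, t2]
      linarith
    have hbδ : |Y.1 - γ Y.2| < δ0 := by linarith [hεK]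
    have hγY := hB Y.2 hY2
    rw [abs_lt] at hbδ
    exact ⟨⟨⟨by linarith [hγY.1], by linarith [hγY.2]⟩, hY2o⟩, by rw [abs_lt]; constructor <;> linarith⟩


/-- for `T ≥ 2` and `0 < ε < δ0/(2√(M²+1))`, every moving domain `q_γ`
with `γ ∈ 𝒢_ad` has its `ε`-interior satisfying the geometric optics condition; in
particular `q_γ` belongs to the admissible class `𝒬_ad^ε`. -/
theorem qGamma_mem_Qad (T M δ0 ε : ℝ)
    (hT : 2 ≤ T) (hM : 0 < M) (hδ0 : 0 < δ0) (hδ0' : δ0 < 1 / 2)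
    (hε : 0 < ε) (hε' : ε < δ0 / (2 * Real.sqrt (M ^ 2 + 1))) :
    ∀ γ ∈ Gad T M δ0,
      GeoOptics T (epsInterior ε (qGamma T δ0 γ)) ∧
      IsOpen (qGamma T δ0 γ) ∧
      qGamma T δ0 γ ⊆ Set.Ioo (0 : ℝ) 1 ×ˢ Set.Ioo (0 : ℝ) T := by
  intro γ hγ
  obtain ⟨hL, hB⟩ := hγ
  have hK0 : 0 < Real.sqrt (M^2+1) := Real.sqrt_pos.mpr (by positivity)
  have hεK : ε * Real.sqrt (M^2+1) < δ0/2 := by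
    have h2K : 0 < 2 * Real.sqrt (M^2+1) := by linarith
    have := (lt_div_iff₀ h2K).mp hε'
    nlinarith
  have hopen := qGamma_open T M δ0 γ hM hδ0 hL hB
  refine ⟨?_, hopen, fun p hp => hp.1⟩
  intro x0 hx0 σ hσ
  obtain ⟨hx00, hx01⟩ := hx0
  rcases hσ with rfl | rfl
  · apply crossing T M δ0 ε γ x0 1 (2 - x0) (1 - x0) hT hM hδ0 hδ0' hε hεK hL hB hopen
    · exact abs_one
    · exact ⟨by linarith, by linarith⟩
    · exact ⟨by linarith, by linarith⟩
    · rw [show x0 + 1 * (2 - x0) = 2 by ring]; exact fold_two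
    · rw [show x0 + 1 * (1 - x0) = 1 by ring]; exact fold_one
  · apply crossing T M δ0 ε γ x0 (-1) x0 (x0 + 1) hT hM hδ0 hδ0' hε hεK hL hB hopen
    · rw [abs_neg, abs_one]
    · exact ⟨by linarith, by linarith⟩
    · exact ⟨by linarith, by linarith⟩
    · rw [show x0 + (-1) * x0 = 0 by ring]; exact fold_zero
    · rw [show x0 + (-1) * (x0 + 1) = -1 by ring]; exact fold_neg_one
end

section
/- Let m ≥ 1 and p ≥ 1 be integers, let d : Fin m → ℝ and let w : Fin m → Fin m → ℝ satisfy w i j = w j i and w i i = 0 for all i, j. Let A be the m×m real matrix with A i i = d i and A i j = −w i j for i ≠ j, and let A^p be the mp×mp real matrix indexed by pairs (i,k) with i ∈ Fin m, k ∈ Fin p, given blockwise by: the (i,i) diagonal block equals p·(d i)·I_p and the (i,j) off-diagonal block (i ≠ j) equals −(w i j)·J_p, where I_p is the p×p identity matrix and J_p the p×p all-ones matrix. Then the characteristic polynomial of (1/p)·A^p equals the characteristic polynomial of A multiplied by ∏_{i} (X − d i)^{p−1}; equivalently, the spectrum of (1/p)·A^p consists of the spectrum of A together with the diagonal entries d i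 of A, each repeated p − 1 times. -/
/-! With `D = diagonal d` one has `(1/p) • A^p = (A - D) ⊗ₖ (1/p) • J_p + D ⊗ₖ I_p`. The averaging
matrix `(1/p) • J_p` is conjugate, by a unitriangular matrix `P`, to an upper triangular matrix with
diagonal `(1, 0, …, 0)`. Conjugating by `I_m ⊗ₖ P` therefore makes the Kronecker sum block upper
triangular along the `Fin p` coordinate, with diagonal blocks `A` and `p - 1` copies of `D`. -/

open Polynomial Matrix Finset Kronecker

namespace Matrix

variable {R m p : Type*} [CommRing R] [Fintype m] [DecidableEq m]

theorem charpoly_eq_of_mul_eq_mul {P M N : Matrix m m R} (hP : IsUnit P) (h : M * P = P * N) :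
    M.charpoly = N.charpoly := by
  obtain ⟨u, rfl⟩ := hP
  calc M.charpoly = (M * u * (u⁻¹ : (Matrix m m R)ˣ)).charpoly := by
        rw [mul_assoc, Units.mul_inv, Matrix.mul_one]
    _ = ((u⁻¹ : (Matrix m m R)ˣ) * (M * u)).charpoly := charpoly_mul_comm _ _
    _ = N.charpoly := by rw [h, ← Matrix.mul_assoc, Units.inv_mul, Matrix.one_mul]

section DecidableEq

variable [Fintype p] [DecidableEq p]

theorem kronecker_add_kronecker_one_mul_one_kronecker {M D : Matrix m m R} {K P T : Matrix p p R}
    (h : K * P = P * T) :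
    (M ⊗ₖ K + D ⊗ₖ 1) * (1 ⊗ₖ P) = (1 ⊗ₖ P) * (M ⊗ₖ T + D ⊗ₖ 1) := by
  simp only [Matrix.add_mul, Matrix.mul_add, ← mul_kronecker_mul, Matrix.mul_one, Matrix.one_mul, h]

theorem isUnit_one_kronecker {P : Matrix p p R} (hP : IsUnit P) :
    IsUnit ((1 : Matrix m m R) ⊗ₖ P) := by
  rw [isUnit_iff_isUnit_det, det_kronecker, det_one, one_pow, one_mul]
  exact ((isUnit_iff_isUnit_det P).mp hP).pow _

end DecidableEq

section LinearOrder

variable [LinearOrder p]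

omit [Fintype m] [DecidableEq m] in
theorem blockTriangular_kronecker_add_kronecker_one (M D : Matrix m m R) {T : Matrix p p R}
    (hT : T.BlockTriangular id) : (M ⊗ₖ T + D ⊗ₖ 1).BlockTriangular Prod.snd := by
  rintro ⟨i, k⟩ ⟨j, l⟩ (hlk : l < k)
  simp [hT hlk, hlk.ne']

theorem charpoly_kronecker_add_kronecker_one [Fintype p] (M D : Matrix m m R) {T : Matrix p p R}
    (hT : T.BlockTriangular id) :
    (M ⊗ₖ T + D ⊗ₖ 1).charpoly = ∏ k, (T k k • M + D).charpoly := by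
  rw [charpoly, (blockTriangular_kronecker_add_kronecker_one M D hT).charmatrix.det_fintype]
  refine prod_congr rfl fun k _ => ?_
  let e : m ≃ {x : m × p // x.2 = k} :=
    { toFun i := ⟨(i, k), rfl⟩
      invFun x := x.1.1
      left_inv _ := rfl
      right_inv := by rintro ⟨⟨i, _⟩, rfl⟩; rfl }
  rw [← charmatrix_toSquareBlock, ← charpoly, ← charpoly_reindex e]
  congr 1
  ext ⟨⟨i, k'⟩, hi⟩ ⟨⟨j, l'⟩, hj⟩
  dsimp only at hi hj
  subst hi hj
  simp [e, toSquareBlock_def, mul_comm]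

end LinearOrder

theorem charpoly_kronecker_const_add_kronecker_one {q : ℕ} {c : R} (hc : (q + 1 : R) * c = 1)
    (M D : Matrix m m R) :
    (M ⊗ₖ of (fun _ _ : Fin (q + 1) => c) + D ⊗ₖ 1).charpoly =
      (M + D).charpoly * D.charpoly ^ q := by
  -- The columns of `P` are `1, e₁, …, e_q`; as `c • J` fixes `1` and sends every `eₖ` to `c • 1`,
  -- conjugation by `P` leaves only a first row `(1, c, …, c)`.
  let P : Matrix (Fin (q + 1)) (Fin (q + 1)) R := of fun k l => if l = 0 ∨ k = l then 1 else 0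
  let T : Matrix (Fin (q + 1)) (Fin (q + 1)) R :=
    of fun k l => if k = 0 then (if l = 0 then 1 else c) else 0
  have hP : IsUnit P := by
    have hlower : P.IsLowerTriangular := by
      intro k l (hkl : k < l)
      simp [P, hkl.ne, ((Fin.zero_le k).trans_lt hkl).ne']
    rw [isUnit_iff_isUnit_det, det_of_isLowerTriangular P hlower]
    simp [P]
  have hT : T.BlockTriangular id := by
    intro k l (hlk : l < k)
    simp [T, ((Fin.zero_le l).trans_lt hlk).ne']
  have hKP : of (fun _ _ => c) * P = P * T := by
    ext k l
    rcases eq_or_ne l 0 with rfl | hl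
    · simp [P, T, mul_apply, sum_const, hc]
    · simp [P, T, mul_apply, hl]
  rw [charpoly_eq_of_mul_eq_mul (isUnit_one_kronecker hP)
      (kronecker_add_kronecker_one_mul_one_kronecker hKP),
    charpoly_kronecker_add_kronecker_one M D hT, Fin.prod_univ_succ]
  simp [T, Fin.succ_ne_zero]

end Matrix

theorem block_laplacian_charpoly_general (m p : ℕ) (hp : 1 ≤ p)
    (d : Fin m → ℝ) (w : Fin m → Fin m → ℝ) :
    Matrix.charpoly
        ((1 / (p : ℝ)) •
          (Matrix.of fun x y : Fin m × Fin p =>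
            if x.1 = y.1 then (if x.2 = y.2 then (p : ℝ) * d x.1 else 0)
            else -w x.1 y.1))
      = Matrix.charpoly (Matrix.of fun i j : Fin m => if i = j then d i else -w i j)
          * ∏ i : Fin m, (X - C (d i)) ^ (p - 1) := by
  obtain ⟨q, rfl⟩ := Nat.exists_eq_add_of_le' hp
  set A : Matrix (Fin m) (Fin m) ℝ := of fun i j => if i = j then d i else -w i j
  have hblocks : (1 / ((q + 1 : ℕ) : ℝ)) •
        (of fun x y : Fin m × Fin (q + 1) =>
          if x.1 = y.1 then (if x.2 = y.2 then ((q + 1 : ℕ) : ℝ) * d x.1 else 0) else -w x.1 y.1)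
      = (A - diagonal d) ⊗ₖ of (fun _ _ => 1 / ((q + 1 : ℕ) : ℝ)) + diagonal d ⊗ₖ 1 := by
    ext ⟨i, k⟩ ⟨j, l⟩
    simp only [Matrix.smul_apply, of_apply, Matrix.add_apply, Matrix.sub_apply, kroneckerMap_apply,
      diagonal_apply, one_apply, A, smul_eq_mul]
    split_ifs <;> field_simp <;> ring
  rw [hblocks, charpoly_kronecker_const_add_kronecker_one (by push_cast; field_simp),
    sub_add_cancel, charpoly_diagonal, prod_pow, Nat.add_sub_cancel]

/-- Lemma 2.12: the spectrum of `(1/p)·A^p` consists of the spectrum of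
`A` together with the diagonal entries of `A`, each repeated `p − 1` times; equivalently
the characteristic polynomial of `(1/p)·A^p` is that of `A` times `∏ᵢ (X − dᵢ)^{p−1}`. -/
theorem block_laplacian_charpoly (m p : ℕ) (hm : 1 ≤ m) (hp : 1 ≤ p)
    (d : Fin m → ℝ) (w : Fin m → Fin m → ℝ)
    (hsymm : ∀ i j, w i j = w j i) (hdiag : ∀ i, w i i = 0) :
    Matrix.charpoly
        ((1 / (p : ℝ)) •
          (Matrix.of fun x y : Fin m × Fin p =>
            if x.1 = y.1 then (if x.2 = y.2 then (p : ℝ) * d x.1 else 0)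
            else -w x.1 y.1))
      = Matrix.charpoly (Matrix.of fun i j : Fin m => if i = j then d i else -w i j)
          * ∏ i : Fin m, (X - C (d i)) ^ (p - 1) :=
  block_laplacian_charpoly_general m p hp d w
end

section
/- Let m ≥ 1 and p ≥ 1 be integers, let d : Fin m → ℝ and let w : Fin m → Fin m → ℝ satisfy w i j = w j i and w i i = 0 for all i, j. Let A be the m×m real matrix with A i i = d i and A i j = −w i j for i ≠ j, and let A^p be the mp×mp real matrix whose (i,i) diagonal block equals p·(d i)·I_p and whose (i,j) off-diagonal block (i ≠ j) equals −(w i j)·J_p. Assume that the kernel of A is one-dimensional and spanned by the all-ones vector 𝟏_m, and that d i ≠ 0 for every i. Then the kernel of A^p is one-dimensional and spanned by the all-ones vector 𝟏_{mp}. -/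
/-- Lemma 2.12, kernel statement: if the kernel of the Laplacian-type
matrix `A` is spanned by the all-ones vector and all diagonal entries `dᵢ` are nonzero,
then the kernel of the block matrix `A^p` is one-dimensional, spanned by the all-ones
vector. -/
theorem block_laplacian_kernel (m p : ℕ) (hm : 1 ≤ m) (hp : 1 ≤ p)
    (d : Fin m → ℝ) (w : Fin m → Fin m → ℝ)
    (hsymm : ∀ i j, w i j = w j i) (hdiag : ∀ i, w i i = 0)
    (hker : ∀ v : Fin m → ℝ,
      (Matrix.of fun i j : Fin m => if i = j then d i else -w i j).mulVec v = 0 ↔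
        ∃ c : ℝ, v = fun _ => c)
    (hd : ∀ i, d i ≠ 0) :
    (∀ v : Fin m × Fin p → ℝ,
      (Matrix.of fun x y : Fin m × Fin p =>
        if x.1 = y.1 then (if x.2 = y.2 then (p : ℝ) * d x.1 else 0)
        else -w x.1 y.1).mulVec v = 0 ↔ ∃ c : ℝ, v = fun _ => c) ∧
    Module.finrank ℝ
      (LinearMap.ker (Matrix.mulVecLin
        (Matrix.of fun x y : Fin m × Fin p =>
          if x.1 = y.1 then (if x.2 = y.2 then (p : ℝ) * d x.1 else 0)
          else -w x.1 y.1))) = 1 := by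
  have hp0 : (p : ℝ) ≠ 0 := by positivity
  -- formula for A.mulVec
  have hAmul : ∀ (s : Fin m → ℝ) (i : Fin m),
      (Matrix.of fun i j : Fin m => if i = j then d i else -w i j).mulVec s i
        = d i * s i - ∑ j, w i j * s j := by
    intro s i
    simp only [Matrix.mulVec, dotProduct, Matrix.of_apply]
    have h1 : ∀ j : Fin m, (if i = j then d i else -w i j) * s j
        = (if i = j then d i * s j else 0) - w i j * s j := by
      intro j; by_cases h : i = j
      · subst h; simp [hdiag]
      · simp [h]
    simp only [h1, Finset.sum_sub_distrib, Finset.sum_ite_eq, Finset.mem_univ, if_true]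
  -- formula for B.mulVec
  have hBmul : ∀ (v : Fin m × Fin p → ℝ) (i : Fin m) (k : Fin p),
      (Matrix.of fun x y : Fin m × Fin p =>
        if x.1 = y.1 then (if x.2 = y.2 then (p : ℝ) * d x.1 else 0)
        else -w x.1 y.1).mulVec v (i, k)
        = (p : ℝ) * d i * v (i, k) - ∑ j, w i j * ∑ l, v (j, l) := by
    intro v i k
    simp only [Matrix.mulVec, dotProduct, Matrix.of_apply]
    rw [Fintype.sum_prod_type]
    have h1 : ∀ (j : Fin m) (l : Fin p),
        (if i = j then (if k = l then (p : ℝ) * d i else 0) else -w i j) * v (j, l)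
          = (if k = l then (if i = j then (p : ℝ) * d i * v (j, l) else 0) else 0)
            - w i j * v (j, l) := by
      intro j l
      by_cases h : i = j
      · subst h
        by_cases h' : k = l <;> simp [h', hdiag]
      · by_cases h' : k = l <;> simp [h, h']
    simp only [h1, Finset.sum_sub_distrib, Finset.sum_ite_eq, Finset.mem_univ, if_true,
      Finset.mul_sum]
  -- d i = ∑ j, w i j
  have hdw : ∀ i, d i = ∑ j, w i j := by
    intro i
    have h0 : (Matrix.of fun i j : Fin m => if i = j then d i else -w i j).mulVec
        (fun _ => (1 : ℝ)) = 0 := (hker _).mpr ⟨1, rfl⟩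
    have := congrFun h0 i
    rw [hAmul] at this
    simp only [mul_one, Pi.zero_apply] at this
    linarith
  have key : ∀ v : Fin m × Fin p → ℝ,
      (Matrix.of fun x y : Fin m × Fin p =>
        if x.1 = y.1 then (if x.2 = y.2 then (p : ℝ) * d x.1 else 0)
        else -w x.1 y.1).mulVec v = 0 ↔ ∃ c : ℝ, v = fun _ => c := by
    intro v
    constructor
    · intro h
      set s : Fin m → ℝ := fun j => ∑ l, v (j, l) with hs
      have heach : ∀ (i : Fin m) (k : Fin p),
          (p : ℝ) * d i * v (i, k) = ∑ j, w i j * s j := by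
        intro i k
        have := congrFun h (i, k)
        rw [hBmul] at this
        simp only [Pi.zero_apply] at this
        linarith
      have hds : ∀ i, d i * s i = ∑ j, w i j * s j := by
        intro i
        have hsv : s i = ∑ k, v (i, k) := rfl
        have h1 : (p : ℝ) * (d i * s i) = (p : ℝ) * ∑ j, w i j * s j := by
          calc (p : ℝ) * (d i * s i) = ∑ k : Fin p, (p : ℝ) * d i * v (i, k) := by
                rw [← mul_assoc, hsv, Finset.mul_sum]
            _ = ∑ _k : Fin p, ∑ j, w i j * s j :=
                Finset.sum_congr rfl fun k _ => heach i k
            _ = (p : ℝ) * ∑ j, w i j * s j := by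
                rw [Finset.sum_const, Finset.card_univ, Fintype.card_fin, nsmul_eq_mul]
        exact mul_left_cancel₀ hp0 h1
      have hAs : (Matrix.of fun i j : Fin m => if i = j then d i else -w i j).mulVec s = 0 := by
        funext i
        rw [hAmul, hds i, sub_self]
        rfl
      obtain ⟨c, hc⟩ := (hker s).mp hAs
      refine ⟨c / p, ?_⟩
      funext x
      obtain ⟨i, k⟩ := x
      have hdi := hd i
      have hTc : (∑ j, w i j * s j) = d i * c := by
        rw [hc]
        simp only []
        rw [← Finset.sum_mul, ← hdw]
      have h2 := heach i k
      rw [hTc] at h2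
      have h3 : (p : ℝ) * v (i, k) = c := by
        refine mul_left_cancel₀ hdi ?_
        rw [show d i * ((p : ℝ) * v (i, k)) = (p : ℝ) * d i * v (i, k) from by ring, h2]
      rw [eq_div_iff hp0, mul_comm]
      exact h3
    · rintro ⟨c, rfl⟩
      funext x
      obtain ⟨i, k⟩ := x
      rw [hBmul]
      simp only [Finset.sum_const, Finset.card_univ, Fintype.card_fin, nsmul_eq_mul,
        Pi.zero_apply]
      rw [show (∑ j, w i j * ((p : ℝ) * c)) = (∑ j, w i j) * ((p : ℝ) * c) from
        (Finset.sum_mul _ _ _).symm, ← hdw]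
      ring
  refine ⟨key, ?_⟩
  have hone : (fun _ : Fin m × Fin p => (1 : ℝ)) ≠ 0 := by
    have hne : Nonempty (Fin m × Fin p) := ⟨⟨⟨0, hm⟩, ⟨0, hp⟩⟩⟩
    intro h
    have := congrFun h hne.some
    simp at this
  have hker' : LinearMap.ker (Matrix.mulVecLin
      (Matrix.of fun x y : Fin m × Fin p =>
        if x.1 = y.1 then (if x.2 = y.2 then (p : ℝ) * d x.1 else 0)
        else -w x.1 y.1)) = Submodule.span ℝ {fun _ : Fin m × Fin p => (1 : ℝ)} := by
    ext v
    rw [LinearMap.mem_ker, Matrix.mulVecLin_apply, key v, Submodule.mem_span_singleton]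
    constructor
    · rintro ⟨c, rfl⟩
      exact ⟨c, by funext x; simp⟩
    · rintro ⟨a, rfl⟩
      exact ⟨a, by funext x; simp⟩
  rw [hker', finrank_span_singleton hone]
end

section
/- Let m ≥ 1 and p ≥ 2 be integers, let d : Fin m → ℝ and let w : Fin m → Fin m → ℝ satisfy w i j = w j i ≥ 0 and w i i = 0 for all i, j. Let A be the m×m real matrix with A i i = d i and A i j = −w i j for i ≠ j, and let A^p be the mp×mp real matrix whose (i,i) diagonal block equals p·(d i)·I_p and whose (i,j) off-diagonal block (i ≠ j) equals −(w i j)·J_p. Assume A is positive semidefinite with kernel spanned by the all-ones vector, that d i > 0 for every i, and let λ(A) denote the smallest nonzero eigenvalue of A. Then the smallest nonzero eigenvalue of (1/p)·A^p equals min( λ(A), min_i d i ). -/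
/-- equation (2.34): the smallest nonzero eigenvalue of `(1/p)·A^p`
equals `min(λ(A), minᵢ dᵢ)`, for `p ≥ 2`, when `A` is positive semidefinite with kernel
spanned by the all-ones vector and positive diagonal entries. -/
theorem block_laplacian_smallest_nonzero_eigenvalue (m p : ℕ) (hm : 1 ≤ m) (hp : 2 ≤ p)
    (d : Fin m → ℝ) (w : Fin m → Fin m → ℝ)
    (hsymm : ∀ i j, w i j = w j i) (hw : ∀ i j, 0 ≤ w i j) (hdiag : ∀ i, w i i = 0)
    (hpsd : Matrix.PosSemidef (Matrix.of fun i j : Fin m => if i = j then d i else -w i j))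
    (hker : ∀ v : Fin m → ℝ,
      (Matrix.of fun i j : Fin m => if i = j then d i else -w i j).mulVec v = 0 ↔
        ∃ c : ℝ, v = fun _ => c)
    (hd : ∀ i, 0 < d i)
    (lam : ℝ)
    (hlam : IsLeast {μ : ℝ | μ ≠ 0 ∧ ∃ v : Fin m → ℝ, v ≠ 0 ∧
      (Matrix.of fun i j : Fin m => if i = j then d i else -w i j).mulVec v = μ • v} lam) :
    IsLeast {μ : ℝ | μ ≠ 0 ∧ ∃ v : Fin m × Fin p → ℝ, v ≠ 0 ∧
        ((1 / (p : ℝ)) •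
          (Matrix.of fun x y : Fin m × Fin p =>
            if x.1 = y.1 then (if x.2 = y.2 then (p : ℝ) * d x.1 else 0)
            else -w x.1 y.1)).mulVec v = μ • v}
      (min lam (Finset.univ.inf' (Finset.univ_nonempty_iff.mpr ⟨⟨0, hm⟩⟩) d)) := by
  have hp0 : (p : ℝ) ≠ 0 := Nat.cast_ne_zero.mpr (by omega)
  -- notation
  set A : Matrix (Fin m) (Fin m) ℝ :=
    Matrix.of fun i j : Fin m => if i = j then d i else -w i j with hAdef
  set D : ℝ := Finset.univ.inf' (Finset.univ_nonempty_iff.mpr ⟨⟨0, hm⟩⟩) d with hDdef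
  have hD_pos : 0 < D := by
    rw [hDdef, Finset.lt_inf'_iff]
    exact fun i _ => hd i
  have hD_le : ∀ i, D ≤ d i := fun i => Finset.inf'_le _ (Finset.mem_univ i)
  -- action of A
  have hAmul : ∀ (u : Fin m → ℝ) (i : Fin m),
      A.mulVec u i = d i * u i - ∑ j, w i j * u j := by
    intro u i
    simp only [hAdef, Matrix.mulVec, dotProduct, Matrix.of_apply]
    rw [show (∑ j, (if i = j then d i else -w i j) * u j)
        = ∑ j, ((if i = j then d j * u j else 0) - w i j * u j) from
      Finset.sum_congr rfl fun j _ => by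
        by_cases h : i = j
        · simp [h, hdiag]
        · simp [h]]
    rw [Finset.sum_sub_distrib, Finset.sum_ite_eq Finset.univ i (fun j => d j * u j)]
    simp
  -- action of (1/p) • B
  have hBmul : ∀ (v : Fin m × Fin p → ℝ) (i : Fin m) (a : Fin p),
      ((1 / (p : ℝ)) •
        (Matrix.of fun x y : Fin m × Fin p =>
          if x.1 = y.1 then (if x.2 = y.2 then (p : ℝ) * d x.1 else 0)
          else -w x.1 y.1)).mulVec v (i, a)
        = d i * v (i, a) - (1 / (p : ℝ)) * ∑ j, w i j * ∑ b, v (j, b) := by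
    intro v i a
    rw [Matrix.smul_mulVec]
    simp only [Pi.smul_apply, smul_eq_mul, Matrix.mulVec, dotProduct, Matrix.of_apply]
    rw [Fintype.sum_prod_type]
    rw [show (∑ j, ∑ b, (if i = j then (if a = b then (p:ℝ) * d i else 0) else -w i j) * v (j, b))
        = ∑ j, ((if i = j then (p:ℝ) * d j * v (j, a) else 0) - w i j * ∑ b, v (j, b)) from
      Finset.sum_congr rfl fun j _ => by
        by_cases h : i = j
        · subst h
          simp [hdiag, ite_mul, Finset.sum_ite_eq]
        · simp only [if_neg h, Finset.mul_sum, zero_sub]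
          rw [← Finset.sum_neg_distrib]
          exact Finset.sum_congr rfl fun b _ => by ring]
    rw [Finset.sum_sub_distrib, Finset.sum_ite_eq Finset.univ i (fun j => (p:ℝ) * d j * v (j, a))]
    simp only [Finset.mem_univ, if_pos]
    field_simp
  constructor
  · -- membership
    rcases le_or_gt lam D with hcase | hcase
    · -- min = lam : lift an eigenvector of A
      rw [min_eq_left hcase]
      obtain ⟨⟨hlam_ne, v, hv_ne, hv_eig⟩, _⟩ := hlam
      refine ⟨hlam_ne, fun x => v x.1, ?_, ?_⟩
      · intro h
        apply hv_ne
        funext i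
        have := congrFun h (i, ⟨0, by omega⟩)
        simpa using this
      · funext x
        obtain ⟨i, a⟩ := x
        rw [hBmul]
        have h1 : ∀ j, (∑ b : Fin p, v j) = (p : ℝ) * v j := by
          intro j; simp [Finset.sum_const, mul_comm]
        have h2 : A.mulVec v i = lam * v i := by rw [hv_eig]; simp
        rw [hAmul] at h2
        simp only [h1, Pi.smul_apply, smul_eq_mul]
        have h3 : (1 / (p:ℝ)) * ∑ j, w i j * ((p:ℝ) * v j) = ∑ j, w i j * v j := by
          rw [show (∑ j, w i j * ((p:ℝ) * v j)) = (p:ℝ) * ∑ j, w i j * v j by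
            rw [Finset.mul_sum]; exact Finset.sum_congr rfl fun j _ => by ring]
          field_simp
        rw [h3]
        linarith [h2]
    · -- min = D = d i0 : use a mean-zero vector on block i0
      rw [min_eq_right hcase.le]
      obtain ⟨i0, -, hi0⟩ := Finset.exists_mem_eq_inf' (Finset.univ_nonempty_iff.mpr ⟨⟨0, hm⟩⟩) d
      set V : Fin m × Fin p → ℝ := fun x =>
        if x.1 = i0 then
          (if x.2 = (⟨0, by omega⟩ : Fin p) then 1 else
            if x.2 = (⟨1, by omega⟩ : Fin p) then -1 else 0)
        else 0 with hVdef
      have hS : ∀ j, (∑ b, V (j, b)) = 0 := by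
        intro j
        by_cases h : j = i0
        · subst h
          simp only [hVdef, if_pos rfl]
          rw [show (∑ b : Fin p, (if b = (⟨0, by omega⟩ : Fin p) then (1:ℝ) else
              if b = (⟨1, by omega⟩ : Fin p) then -1 else 0))
            = ∑ b : Fin p, ((if b = (⟨0, by omega⟩ : Fin p) then (1:ℝ) else 0)
              + (if b = (⟨1, by omega⟩ : Fin p) then -1 else 0)) from
            Finset.sum_congr rfl fun b _ => by
              by_cases h0 : b = (⟨0, by omega⟩ : Fin p)
              · have : b ≠ (⟨1, by omega⟩ : Fin p) := by
                  rw [h0]; intro hc; exact absurd (congrArg Fin.val hc) (by simp)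
                simp [h0, this]
              · by_cases h1 : b = (⟨1, by omega⟩ : Fin p) <;> simp [h0, h1]]
          rw [Finset.sum_add_distrib]
          simp [Finset.sum_ite_eq']
        · simp [hVdef, h]
      refine ⟨ne_of_gt hD_pos, V, ?_, ?_⟩
      · intro h
        have := congrFun h (i0, ⟨0, by omega⟩)
        simp [hVdef] at this
      · funext x
        obtain ⟨i, a⟩ := x
        rw [hBmul]
        simp only [hS, mul_zero, Finset.sum_const_zero, mul_zero, sub_zero,
          Pi.smul_apply, smul_eq_mul]
        by_cases h : i = i0
        · subst h; rw [hDdef, hi0]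
        · simp [hVdef, h]
  · -- lower bound
    rintro μ ⟨hμ0, v, hv0, hveq⟩
    have hcancel : ∀ x : ℝ, (p:ℝ) * (1 / (p:ℝ) * x) = x := fun x => by
      rw [← mul_assoc, mul_one_div_cancel hp0, one_mul]
    have hcancel' : ∀ x : ℝ, 1 / (p:ℝ) * ((p:ℝ) * x) = x := fun x => by
      rw [← mul_assoc, one_div_mul_cancel hp0, one_mul]
    have hpt : ∀ (i : Fin m) (a : Fin p),
        d i * v (i, a) - 1 / (p:ℝ) * ∑ j, w i j * ∑ b, v (j, b) = μ * v (i, a) := by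
      intro i a
      have := congrFun hveq (i, a)
      rw [hBmul] at this
      simpa using this
    have hAS : ∀ i : Fin m,
        d i * (∑ b, v (i, b)) - ∑ j, w i j * ∑ b, v (j, b) = μ * ∑ b, v (i, b) := by
      intro i
      have h1 : ∑ a : Fin p, (d i * v (i, a) - 1 / (p:ℝ) * ∑ j, w i j * ∑ b, v (j, b))
          = ∑ a : Fin p, μ * v (i, a) :=
        Finset.sum_congr rfl fun a _ => hpt i a
      rw [Finset.sum_sub_distrib, ← Finset.mul_sum, ← Finset.mul_sum,
        Finset.sum_const, Finset.card_univ, Fintype.card_fin, nsmul_eq_mul] at h1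
      rw [hcancel'] at h1
      rw [← Finset.mul_sum] at h1
      exact h1
    have hpt' : ∀ (i : Fin m) (a : Fin p),
        (p:ℝ) * (d i * v (i, a)) - ∑ j, w i j * ∑ b, v (j, b)
          = (p:ℝ) * (μ * v (i, a)) := by
      intro i a
      have h1 : (p:ℝ) * (d i * v (i, a))
            - (p:ℝ) * (1 / (p:ℝ) * ∑ j, w i j * ∑ b, v (j, b))
          = (p:ℝ) * (μ * v (i, a)) := by
        linear_combination (p:ℝ) * hpt i a
      rwa [hcancel] at h1
    have hres : ∀ (i : Fin m) (a : Fin p),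
        d i * ((p:ℝ) * v (i, a) - ∑ b, v (i, b))
          = μ * ((p:ℝ) * v (i, a) - ∑ b, v (i, b)) := by
      intro i a
      linear_combination hpt' i a - hAS i
    by_cases hz : ∀ (i : Fin m) (a : Fin p), (p:ℝ) * v (i, a) = ∑ b, v (i, b)
    · -- v is fiberwise constant: μ is a nonzero eigenvalue of A
      have hS0 : (fun j => ∑ b, v (j, b)) ≠ (0 : Fin m → ℝ) := by
        intro h
        apply hv0
        funext x
        obtain ⟨i, a⟩ := x
        have h1 := hz i a
        have h2 := congrFun h i
        simp only [Pi.zero_apply] at h2 ⊢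
        rw [h2] at h1
        exact by
          have := mul_eq_zero.mp h1
          rcases this with h | h
          · exact absurd h hp0
          · exact h
      have hAeig : A.mulVec (fun j => ∑ b, v (j, b)) = μ • (fun j => ∑ b, v (j, b)) := by
        funext i
        rw [hAmul, Pi.smul_apply, smul_eq_mul]
        simpa using hAS i
      have := hlam.2 ⟨hμ0, fun j => ∑ b, v (j, b), hS0, hAeig⟩
      exact le_trans (min_le_left _ _) this
    · -- some mean-zero component survives: μ = d i for some i
      push_neg at hz
      obtain ⟨i, a, hia⟩ := hz
      have hx : (p:ℝ) * v (i, a) - ∑ b, v (i, b) ≠ 0 := sub_ne_zero_of_ne hia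
      have hdi : d i = μ := mul_right_cancel₀ hx (hres i a)
      calc min lam D ≤ D := min_le_right _ _
        _ ≤ d i := hD_le i
        _ = μ := hdi
end
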